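/- Let f(z) = ∑_{j≥0} g_j z^j be a power series with nonnegative real coefficients g_j, with g_0 > 0 and g_1 > 0, converging for |z| ≤ y where 0 < y < 1. Then for every real s, f(y)^2 - |f(y e^{is})|^2 ≥ 2 g_0 g_1 y (1 - cos s). -/

import Mathlib

/-!
Write `f(w) = g₀ + g₁ w + R(w)` with `R` the tail `∑_{j ≥ 2} g_j w^j`, and put `r = |w|`,
`t = R(r) ≥ |R(w)|`, `A = |g₀ + g₁ w| ≤ B = g₀ + g₁ r`. Then
`f(r)² - |f(w)|² ≥ (B + t)² - (A + t)² ≥ B² - A² = 2 g₀ g₁ r (1 - cos s)` for `w = r e^{is}`.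
-/

open Complex

lemma sq_add_mul_sub_norm_add_mul_exp_sq (a b r s : ℝ) :
    (a + b * r) ^ 2 - ‖(a : ℂ) + b * (r * exp (s * I))‖ ^ 2 = 2 * a * b * r * (1 - Real.cos s) := by
  rw [Complex.sq_norm, exp_mul_I, ← ofReal_cos, ← ofReal_sin]
  simp only [normSq_apply, add_re, add_im, mul_re, mul_im, ofReal_re, ofReal_im, I_re, I_im]
  linear_combination (-(b ^ 2 * r ^ 2)) * Real.sin_sq_add_cos_sq s

lemma tsum_eq_add_add_tsum_nat_add_two {E : Type*} [NormedAddCommGroup E] {f : ℕ → E}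
    (hf : Summable f) : ∑' j, f j = f 0 + f 1 + ∑' j, f (j + 2) := by
  rw [← hf.sum_add_tsum_nat_add 2, Finset.sum_range_succ, Finset.sum_range_one]

lemma sq_sub_norm_add_mul_sq_le_sq_tsum_sub_norm_tsum_sq {g : ℕ → ℝ} (hg : ∀ j, 0 ≤ g j) {w : ℂ}
    (hsum : Summable fun j => g j * ‖w‖ ^ j) :
    (g 0 + g 1 * ‖w‖) ^ 2 - ‖(g 0 : ℂ) + g 1 * w‖ ^ 2 ≤
      (∑' j, g j * ‖w‖ ^ j) ^ 2 - ‖∑' j, (g j : ℂ) * w ^ j‖ ^ 2 := by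
  have hnorm : ∀ j, ‖(g j : ℂ) * w ^ j‖ = g j * ‖w‖ ^ j := fun j => by
    rw [norm_mul, norm_pow, norm_real, Real.norm_of_nonneg (hg j)]
  have hsumC : Summable fun j => (g j : ℂ) * w ^ j := .of_norm (by simpa only [hnorm] using hsum)
  set t := ∑' j, g (j + 2) * ‖w‖ ^ (j + 2)
  have ht : 0 ≤ t := tsum_nonneg fun j => mul_nonneg (hg _) (by positivity)
  have hhead : ‖(g 0 : ℂ) + g 1 * w‖ ≤ g 0 + g 1 * ‖w‖ := by
    have h := norm_add_le ((g 0 : ℂ) * w ^ 0) (g 1 * w ^ 1)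
    rwa [hnorm, hnorm, pow_zero, pow_zero, mul_one, mul_one, pow_one, pow_one] at h
  have htail : ‖∑' j, (g (j + 2) : ℂ) * w ^ (j + 2)‖ ≤ t := by
    simpa only [hnorm] using norm_tsum_le_tsum_norm (f := fun j => (g (j + 2) : ℂ) * w ^ (j + 2))
      (by simpa only [hnorm] using (summable_nat_add_iff 2).2 hsum)
  have hsplit : ‖∑' j, (g j : ℂ) * w ^ j‖ ≤ ‖(g 0 : ℂ) + g 1 * w‖ + t := by
    rw [tsum_eq_add_add_tsum_nat_add_two hsumC, pow_zero, mul_one, pow_one]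
    exact (norm_add_le _ _).trans (by gcongr)
  rw [tsum_eq_add_add_tsum_nat_add_two hsum, pow_zero, mul_one, pow_one]
  nlinarith [norm_nonneg ((g 0 : ℂ) + g 1 * w), norm_nonneg (∑' j, (g j : ℂ) * w ^ j)]

theorem sq_sub_abs_sq_ge_general (g : ℕ → ℝ) (hg : ∀ j, 0 ≤ g j)
    (y : ℝ) (hy0 : 0 < y)
    (hsum : Summable fun j => g j * y ^ j) (s : ℝ) :
    (∑' j : ℕ, g j * y ^ j) ^ 2 -
        ‖∑' j : ℕ, (g j : ℂ) * (y * Complex.exp (s * Complex.I)) ^ j‖ ^ 2 ≥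
      2 * g 0 * g 1 * y * (1 - Real.cos s) := by
  have hw : ‖(y : ℂ) * exp (s * I)‖ = y := by
    rw [norm_mul, norm_exp_ofReal_mul_I, norm_real, Real.norm_of_nonneg hy0.le, mul_one]
  have key := sq_sub_norm_add_mul_sq_le_sq_tsum_sub_norm_tsum_sq hg (w := y * exp (s * I))
    (by rwa [hw])
  rw [hw, sq_add_mul_sub_norm_add_mul_exp_sq] at key
  exact key

theorem sq_sub_abs_sq_ge (g : ℕ → ℝ) (hg : ∀ j, 0 ≤ g j) (h0 : 0 < g 0) (h1 : 0 < g 1)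
    (y : ℝ) (hy0 : 0 < y) (hy1 : y < 1)
    (hsum : Summable fun j => g j * y ^ j) (s : ℝ) :
    (∑' j : ℕ, g j * y ^ j) ^ 2 -
        ‖∑' j : ℕ, (g j : ℂ) * (y * Complex.exp (s * Complex.I)) ^ j‖ ^ 2 ≥
      2 * g 0 * g 1 * y * (1 - Real.cos s) :=
  sq_sub_abs_sq_ge_general g hg y hy0 hsum s
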